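/- Let R (N×N), Q (N×M), S (M×N), L (M×M) be constant real matrices. Let X : ℝ³ → (N×N real matrices) be infinitely differentiable with X(x,y,t) invertible for all (x,y,t), and Y : ℝ³ → (M×N real matrices) infinitely differentiable, satisfying the linear system X_x = R·X + Q·Y, Y_x = S·X + L·Y, X_y = R·X_x + Q·Y_x, Y_y = S·X_x + L·Y_x, X_t = R·X_y + Q·Y_y, Y_t = S·X_y + L·Y_y. Then φ := Y·X⁻¹ satisfies the matrix pKP equation with product Q: ∂_x(4φ_t − φ_xxx − 6 φ_x Q φ_x) = 3φ_yy − 6(φ_x Q φ_y − φ_y Q φ_x). -/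

import Mathlib

attribute [local instance] Matrix.normedAddCommGroup Matrix.normedSpace

/-- Partial derivative in the `x`-direction of a function of three real variables. -/
noncomputable def pdx {E : Type*} [NormedAddCommGroup E] [NormedSpace ℝ E]
    (f : ℝ × ℝ × ℝ → E) : ℝ × ℝ × ℝ → E :=
  fun p => fderiv ℝ f p (1, 0, 0)

/-- Partial derivative in the `y`-direction of a function of three real variables. -/
noncomputable def pdy {E : Type*} [NormedAddCommGroup E] [NormedSpace ℝ E]
    (f : ℝ × ℝ × ℝ → E) : ℝ × ℝ × ℝ → E :=
  fun p => fderiv ℝ f p (0, 1, 0)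

/-- Partial derivative in the `t`-direction of a function of three real variables. -/
noncomputable def pdt {E : Type*} [NormedAddCommGroup E] [NormedSpace ℝ E]
    (f : ℝ × ℝ × ℝ → E) : ℝ × ℝ × ℝ → E :=
  fun p => fderiv ℝ f p (0, 0, 1)

namespace RiccatiPKP

abbrev Mat (a b : ℕ) := Matrix (Fin a) (Fin b) ℝ

noncomputable def mulL (a b c : ℕ) : Mat a b →L[ℝ] Mat b c →L[ℝ] Mat a c :=
  LinearMap.toContinuousLinearMap <|
  { toFun := fun A => LinearMap.toContinuousLinearMap
      { toFun := fun B => A * B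
        map_add' := fun B C => Matrix.mul_add A B C
        map_smul' := fun r B => (Matrix.mul_smul A r B) }
    map_add' := fun A A' => by ext B; simp [Matrix.add_mul]
    map_smul' := fun r A => by ext B; simp [Matrix.smul_mul] }

@[simp] lemma mulL_apply {a b c : ℕ} (A : Mat a b) (B : Mat b c) : mulL a b c A B = A * B := rfl

@[fun_prop]
theorem _root_.ContDiff.matMul {a b c : ℕ} {f : ℝ × ℝ × ℝ → Mat a b} {g : ℝ × ℝ × ℝ → Mat b c}
    {n : ℕ∞} (hf : ContDiff ℝ n f) (hg : ContDiff ℝ n g) :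
    ContDiff ℝ n fun p => f p * g p := by
  have := ((mulL a b c).contDiff.comp hf).clm_apply hg
  exact this

@[fun_prop]
theorem _root_.DifferentiableAt.matMul {a b c : ℕ} {f : ℝ × ℝ × ℝ → Mat a b} {g : ℝ × ℝ × ℝ → Mat b c}
    {p : ℝ × ℝ × ℝ} (hf : DifferentiableAt ℝ f p) (hg : DifferentiableAt ℝ g p) :
    DifferentiableAt ℝ (fun q => f q * g q) p := by
  have := ((mulL a b c).hasFDerivAt_of_bilinear hf.hasFDerivAt hg.hasFDerivAt).differentiableAt
  exact this

@[fun_prop]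
theorem _root_.Differentiable.matMul {a b c : ℕ} {f : ℝ × ℝ × ℝ → Mat a b} {g : ℝ × ℝ × ℝ → Mat b c}
    (hf : Differentiable ℝ f) (hg : Differentiable ℝ g) :
    Differentiable ℝ fun p => f p * g p := fun p => (hf p).matMul (hg p)

section rules
variable {a b c : ℕ} {p v : ℝ × ℝ × ℝ}

theorem fd_mul {f : ℝ × ℝ × ℝ → Mat a b} {g : ℝ × ℝ × ℝ → Mat b c}
    (hf : DifferentiableAt ℝ f p) (hg : DifferentiableAt ℝ g p) :
    fderiv ℝ (fun q => f q * g q) p v = fderiv ℝ f p v * g p + f p * fderiv ℝ g p v := by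
  have h := (mulL a b c).fderiv_of_bilinear hf hg
  have h2 : (fun q => f q * g q) = fun q => mulL a b c (f q) (g q) := rfl
  rw [h2]; erw [h]
  simp only [ContinuousLinearMap.add_apply, ContinuousLinearMap.precompR,
    ContinuousLinearMap.precompL, ContinuousLinearMap.comp_apply,
    ContinuousLinearMap.flip_apply, mulL_apply]
  exact add_comm _ _

theorem pdx_mul {f : ℝ × ℝ × ℝ → Mat a b} {g : ℝ × ℝ × ℝ → Mat b c}
    (hf : DifferentiableAt ℝ f p) (hg : DifferentiableAt ℝ g p) :
    pdx (fun q => f q * g q) p = pdx f p * g p + f p * pdx g p := fd_mul hf hg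

theorem pdy_mul {f : ℝ × ℝ × ℝ → Mat a b} {g : ℝ × ℝ × ℝ → Mat b c}
    (hf : DifferentiableAt ℝ f p) (hg : DifferentiableAt ℝ g p) :
    pdy (fun q => f q * g q) p = pdy f p * g p + f p * pdy g p := fd_mul hf hg

theorem pdx_add {f g : ℝ × ℝ × ℝ → Mat a b}
    (hf : DifferentiableAt ℝ f p) (hg : DifferentiableAt ℝ g p) :
    pdx (fun q => f q + g q) p = pdx f p + pdx g p := by
  show fderiv ℝ (fun q => f q + g q) p (1,0,0) = _
  erw [fderiv_fun_add hf hg]; rfl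

theorem pdy_add {f g : ℝ × ℝ × ℝ → Mat a b}
    (hf : DifferentiableAt ℝ f p) (hg : DifferentiableAt ℝ g p) :
    pdy (fun q => f q + g q) p = pdy f p + pdy g p := by
  show fderiv ℝ (fun q => f q + g q) p (0,1,0) = _
  erw [fderiv_fun_add hf hg]; rfl

theorem pdx_sub {f g : ℝ × ℝ × ℝ → Mat a b}
    (hf : DifferentiableAt ℝ f p) (hg : DifferentiableAt ℝ g p) :
    pdx (fun q => f q - g q) p = pdx f p - pdx g p := by
  show fderiv ℝ (fun q => f q - g q) p (1,0,0) = _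
  erw [fderiv_fun_sub hf hg]; rfl

theorem pdy_sub {f g : ℝ × ℝ × ℝ → Mat a b}
    (hf : DifferentiableAt ℝ f p) (hg : DifferentiableAt ℝ g p) :
    pdy (fun q => f q - g q) p = pdy f p - pdy g p := by
  show fderiv ℝ (fun q => f q - g q) p (0,1,0) = _
  erw [fderiv_fun_sub hf hg]; rfl

theorem pdx_smul (r : ℝ) {f : ℝ × ℝ × ℝ → Mat a b} (hf : DifferentiableAt ℝ f p) :
    pdx (fun q => r • f q) p = r • pdx f p := by
  show fderiv ℝ (fun q => r • f q) p (1,0,0) = _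
  erw [fderiv_fun_const_smul hf]; rfl

theorem pdy_smul (r : ℝ) {f : ℝ × ℝ × ℝ → Mat a b} (hf : DifferentiableAt ℝ f p) :
    pdy (fun q => r • f q) p = r • pdy f p := by
  show fderiv ℝ (fun q => r • f q) p (0,1,0) = _
  erw [fderiv_fun_const_smul hf]; rfl

theorem pdx_const (A : Mat a b) : pdx (fun _ => A) p = 0 := by
  show fderiv ℝ (fun _ : ℝ × ℝ × ℝ => A) p (1,0,0) = 0
  simp

theorem pdy_const (A : Mat a b) : pdy (fun _ => A) p = 0 := by
  show fderiv ℝ (fun _ : ℝ × ℝ × ℝ => A) p (0,1,0) = 0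
  simp

end rules

lemma contDiff_entry {a b : ℕ} {f : ℝ × ℝ × ℝ → Mat a b} (hf : ContDiff ℝ (⊤:ℕ∞) f)
    (i : Fin a) (j : Fin b) : ContDiff ℝ (⊤:ℕ∞) fun p => f p i j :=
  contDiff_pi.1 (contDiff_pi.1 hf i) j

lemma contDiff_matrix {a b : ℕ} {f : ℝ × ℝ × ℝ → Mat a b}
    (hf : ∀ i j, ContDiff ℝ (⊤:ℕ∞) fun p => f p i j) : ContDiff ℝ (⊤:ℕ∞) f :=
  contDiff_pi.2 fun i => contDiff_pi.2 fun j => hf i j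

lemma contDiff_det {n : ℕ} {A : ℝ × ℝ × ℝ → Mat n n}
    (hA : ∀ i j, ContDiff ℝ (⊤:ℕ∞) fun p => A p i j) :
    ContDiff ℝ (⊤:ℕ∞) fun p => (A p).det := by
  simp only [Matrix.det_apply']
  exact ContDiff.sum fun σ _ => _root_.ContDiff.mul contDiff_const
    (contDiff_prod fun i _ => hA (σ i) i)

lemma contDiff_inv_matrix {n : ℕ} {X : ℝ × ℝ × ℝ → Mat n n}
    (hX : ContDiff ℝ (⊤:ℕ∞) X) (hXinv : ∀ p, IsUnit (X p)) :
    ContDiff ℝ (⊤:ℕ∞) fun p => (X p)⁻¹ := by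
  have hdet : ContDiff ℝ (⊤:ℕ∞) fun p => (X p).det :=
    contDiff_det fun i j => contDiff_entry hX i j
  have hadj : ContDiff ℝ (⊤:ℕ∞) fun p => (X p).adjugate := by
    refine contDiff_matrix fun i j => ?_
    have : (fun p => (X p).adjugate i j)
        = fun p => ((X p).updateRow j (Pi.single i 1)).det := by
      funext p; rw [Matrix.adjugate_apply]
    rw [this]
    refine contDiff_det fun i' j' => ?_
    rcases eq_or_ne i' j with rfl | h
    · simpa [Matrix.updateRow_apply] using contDiff_const
    · simpa [Matrix.updateRow_apply, h] using contDiff_entry hX i' j'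
  have h1 : (fun p => (X p)⁻¹) = fun p => ((X p).det)⁻¹ • (X p).adjugate := by
    funext p
    rw [Matrix.inv_def, Ring.inverse_eq_inv']
  rw [h1]
  refine contDiff_iff_contDiffAt.2 fun p => ContDiffAt.fun_smul ?_ hadj.contDiffAt
  have hne : (X p).det ≠ 0 :=
    ((Matrix.isUnit_iff_isUnit_det (X p)).1 (hXinv p)).ne_zero
  exact (contDiffAt_inv ℝ hne).comp p hdet.contDiffAt

end RiccatiPKP

open RiccatiPKP
set_option maxHeartbeats 4000000

/-- Linearized Riccati system: if `Z = (X; Y)` satisfies `Z_{t_n} = Hⁿ Z` for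
`n = 1, 2, 3` with `H = [[R, Q], [S, L]]` and `X` invertible, then `φ = Y X⁻¹`
solves the matrix pKP equation with product `Q`. -/
theorem matrix_pKP_of_riccati_linear_system (M N : ℕ)
    (R : Matrix (Fin N) (Fin N) ℝ) (Q : Matrix (Fin N) (Fin M) ℝ)
    (S : Matrix (Fin M) (Fin N) ℝ) (L : Matrix (Fin M) (Fin M) ℝ)
    (X : ℝ × ℝ × ℝ → Matrix (Fin N) (Fin N) ℝ)
    (Y : ℝ × ℝ × ℝ → Matrix (Fin M) (Fin N) ℝ)
    (hX : ContDiff ℝ (⊤ : ℕ∞) X) (hY : ContDiff ℝ (⊤ : ℕ∞) Y)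
    (hXinv : ∀ p, IsUnit (X p))
    (hX1 : ∀ p, pdx X p = R * X p + Q * Y p)
    (hY1 : ∀ p, pdx Y p = S * X p + L * Y p)
    (hX2 : ∀ p, pdy X p = R * pdx X p + Q * pdx Y p)
    (hY2 : ∀ p, pdy Y p = S * pdx X p + L * pdx Y p)
    (hX3 : ∀ p, pdt X p = R * pdy X p + Q * pdy Y p)
    (hY3 : ∀ p, pdt Y p = S * pdy X p + L * pdy Y p)
    (φ : ℝ × ℝ × ℝ → Matrix (Fin M) (Fin N) ℝ)
    (hφ : ∀ p, φ p = Y p * (X p)⁻¹) :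
    ∀ p, pdx (fun q => (4 : ℝ) • pdt φ q - pdx (pdx (pdx φ)) q
          - (6 : ℝ) • (pdx φ q * Q * pdx φ q)) p
        = (3 : ℝ) • pdy (pdy φ) p
          - (6 : ℝ) • (pdx φ p * Q * pdy φ p - pdy φ p * Q * pdx φ p) := by
  classical
  set ψ : ℝ × ℝ × ℝ → Matrix (Fin N) (Fin N) ℝ := fun q => (X q)⁻¹ with hψdef
  have hψ : ContDiff ℝ (⊤:ℕ∞) ψ := by rw [hψdef]; exact contDiff_inv_matrix hX hXinv
  have hψd : Differentiable ℝ ψ := hψ.differentiable (by simp)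
  have hXd : Differentiable ℝ X := hX.differentiable (by simp)
  have hYd : Differentiable ℝ Y := hY.differentiable (by simp)
  have hXψ : ∀ p, X p * ψ p = 1 := by
    intro p; simp only [hψdef]
    exact Matrix.mul_nonsing_inv _ ((Matrix.isUnit_iff_isUnit_det _).1 (hXinv p))
  have hψX : ∀ p, ψ p * X p = 1 := by
    intro p; simp only [hψdef]
    exact Matrix.nonsing_inv_mul _ ((Matrix.isUnit_iff_isUnit_det _).1 (hXinv p))
  have hYψ : ∀ p, Y p * ψ p = φ p := by
    intro p; simp only [hψdef]; exact (hφ p).symm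
  have hφf : φ = fun p => Y p * ψ p := funext fun p => (hYψ p).symm
  have hcφ : ContDiff ℝ (⊤:ℕ∞) φ := by rw [hφf]; exact hY.matMul hψ
  have hφd : Differentiable ℝ φ := hcφ.differentiable (by simp)
  have hdψ : ∀ (v : ℝ × ℝ × ℝ) p, fderiv ℝ ψ p v = -(ψ p * (fderiv ℝ X p v * ψ p)) := by
    intro v p
    have h1 : (fun q => X q * ψ q) = fun _ => (1 : Matrix (Fin N) (Fin N) ℝ) := funext hXψ
    have h0 : fderiv ℝ (fun q => X q * ψ q) p v = 0 := by rw [h1]; simp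
    rw [fd_mul (hXd p) (hψd p)] at h0
    have h2 : X p * fderiv ℝ ψ p v = -(fderiv ℝ X p v * ψ p) :=
      eq_neg_of_add_eq_zero_right h0
    calc fderiv ℝ ψ p v = (ψ p * X p) * fderiv ℝ ψ p v := by rw [hψX p, Matrix.one_mul]
    _ = ψ p * (X p * fderiv ℝ ψ p v) := Matrix.mul_assoc _ _ _
    _ = -(ψ p * (fderiv ℝ X p v * ψ p)) := by rw [h2, Matrix.mul_neg]
  have key : ∀ (v : ℝ × ℝ × ℝ) p,
      fderiv ℝ φ p v = fderiv ℝ Y p v * ψ p - φ p * (fderiv ℝ X p v * ψ p) := by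
    intro v p
    conv_lhs => rw [hφf]
    rw [fd_mul (hYd p) (hψd p), hdψ v p, Matrix.mul_neg, ← Matrix.mul_assoc, hYψ p,
      ← sub_eq_add_neg]
  have keyx : ∀ p, pdx φ p = pdx Y p * ψ p - φ p * (pdx X p * ψ p) := fun p => key (1,0,0) p
  have keyy : ∀ p, pdy φ p = pdy Y p * ψ p - φ p * (pdy X p * ψ p) := fun p => key (0,1,0) p
  have keyt : ∀ p, pdt φ p = pdt Y p * ψ p - φ p * (pdt X p * ψ p) := fun p => key (0,0,1) p
  have hXxψ : ∀ p, pdx X p * ψ p = R + Q * φ p := by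
    intro p
    rw [hX1 p, Matrix.add_mul, Matrix.mul_assoc, Matrix.mul_assoc, hXψ p, hYψ p, Matrix.mul_one]
  have hYxψ : ∀ p, pdx Y p * ψ p = S + L * φ p := by
    intro p
    rw [hY1 p, Matrix.add_mul, Matrix.mul_assoc, Matrix.mul_assoc, hXψ p, hYψ p, Matrix.mul_one]
  have hXyψ : ∀ p, pdy X p * ψ p = R * (R + Q * φ p) + Q * (S + L * φ p) := by
    intro p
    rw [hX2 p, Matrix.add_mul, Matrix.mul_assoc, Matrix.mul_assoc, hXxψ p, hYxψ p]
  have hYyψ : ∀ p, pdy Y p * ψ p = S * (R + Q * φ p) + L * (S + L * φ p) := by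
    intro p
    rw [hY2 p, Matrix.add_mul, Matrix.mul_assoc, Matrix.mul_assoc, hXxψ p, hYxψ p]
  have hXtψ : ∀ p, pdt X p * ψ p
      = R * (R * (R + Q * φ p) + Q * (S + L * φ p))
      + Q * (S * (R + Q * φ p) + L * (S + L * φ p)) := by
    intro p
    rw [hX3 p, Matrix.add_mul, Matrix.mul_assoc, Matrix.mul_assoc, hXyψ p, hYyψ p]
  have hYtψ : ∀ p, pdt Y p * ψ p
      = S * (R * (R + Q * φ p) + Q * (S + L * φ p))
      + L * (S * (R + Q * φ p) + L * (S + L * φ p)) := by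
    intro p
    rw [hY3 p, Matrix.add_mul, Matrix.mul_assoc, Matrix.mul_assoc, hXyψ p, hYyψ p]
  have hFx : ∀ p, pdx φ p = S + L * φ p - φ p * (R + Q * φ p) := by
    intro p; rw [keyx p, hXxψ p, hYxψ p]
  have hFy : ∀ p, pdy φ p
      = S * (R + Q * φ p) + L * (S + L * φ p)
      - φ p * (R * (R + Q * φ p) + Q * (S + L * φ p)) := by
    intro p; rw [keyy p, hXyψ p, hYyψ p]
  have hFt : ∀ p, pdt φ p
      = S * (R * (R + Q * φ p) + Q * (S + L * φ p))
      + L * (S * (R + Q * φ p) + L * (S + L * φ p))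
      - φ p * (R * (R * (R + Q * φ p) + Q * (S + L * φ p))
             + Q * (S * (R + Q * φ p) + L * (S + L * φ p))) := by
    intro p; rw [keyt p, hXtψ p, hYtψ p]
  have hFxf : pdx φ = fun p => S + L * φ p - φ p * (R + Q * φ p) := funext hFx
  have hFyf : pdy φ = fun p => S * (R + Q * φ p) + L * (S + L * φ p)
      - φ p * (R * (R + Q * φ p) + Q * (S + L * φ p)) := funext hFy
  have hFtf : pdt φ = fun p => S * (R * (R + Q * φ p) + Q * (S + L * φ p))
      + L * (S * (R + Q * φ p) + L * (S + L * φ p))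
      - φ p * (R * (R * (R + Q * φ p) + Q * (S + L * φ p))
             + Q * (S * (R + Q * φ p) + L * (S + L * φ p))) := funext hFt
  have hdx : Differentiable ℝ (pdx φ) := by rw [hFxf]; fun_prop
  have hdy : Differentiable ℝ (pdy φ) := by rw [hFyf]; fun_prop
  have hFxx : ∀ p, pdx (pdx φ) p
      = L * pdx φ p - (pdx φ p * (R + Q * φ p) + φ p * (Q * pdx φ p)) := by
    intro p
    conv_lhs => rw [hFxf]
    simp (disch := with_unfolding_all exact id (by fun_prop)) only [pdx_sub, pdx_add, pdx_mul, pdx_const,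
      Matrix.zero_mul, Matrix.mul_zero, zero_add, add_zero]
  have hFxxf : pdx (pdx φ) = fun p =>
      L * pdx φ p - (pdx φ p * (R + Q * φ p) + φ p * (Q * pdx φ p)) := funext hFxx
  have hdxx : Differentiable ℝ (pdx (pdx φ)) := by rw [hFxxf]; fun_prop
  have hFxxx : ∀ p, pdx (pdx (pdx φ)) p
      = L * pdx (pdx φ) p
      - ((pdx (pdx φ) p * (R + Q * φ p) + pdx φ p * (Q * pdx φ p))
        + (pdx φ p * (Q * pdx φ p) + φ p * (Q * pdx (pdx φ) p))) := by
    intro p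
    conv_lhs => rw [hFxxf]
    set a := pdx φ with ha
    simp (disch := with_unfolding_all exact id (by fun_prop)) only [pdx_sub, pdx_add, pdx_mul, pdx_const,
      Matrix.zero_mul, Matrix.mul_zero, zero_add, add_zero]
    rfl
  have hFxxxf : pdx (pdx (pdx φ)) = fun p =>
      L * pdx (pdx φ) p
      - ((pdx (pdx φ) p * (R + Q * φ p) + pdx φ p * (Q * pdx φ p))
        + (pdx φ p * (Q * pdx φ p) + φ p * (Q * pdx (pdx φ) p))) := funext hFxxx
  have hFyy : ∀ p, pdy (pdy φ) p
      = S * (Q * pdy φ p) + L * (L * pdy φ p)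
      - (pdy φ p * (R * (R + Q * φ p) + Q * (S + L * φ p))
        + φ p * (R * (Q * pdy φ p) + Q * (L * pdy φ p))) := by
    intro p
    conv_lhs => rw [hFyf]
    simp (disch := with_unfolding_all exact id (by fun_prop)) only [pdy_sub, pdy_add, pdy_mul, pdy_const,
      Matrix.zero_mul, Matrix.mul_zero, zero_add, add_zero]
  -- main computation
  intro p
  simp only [hFtf, hFxxxf]
  set a := pdx φ with ha
  set b := pdx a with hb
  set c := pdy φ with hc
  simp (disch := with_unfolding_all exact id (by fun_prop)) only [pdx_sub, pdx_add, pdx_mul, pdx_smul, pdx_const,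
    Matrix.zero_mul, Matrix.mul_zero, zero_add, add_zero]
  simp only [← ha, ← hb, ← hc]
  simp only [hFxxx, hFxx, hFyy, hFx, hFy]
  simp only [Matrix.mul_add, Matrix.add_mul, Matrix.mul_sub, Matrix.sub_mul,
    smul_add, smul_sub, Matrix.mul_assoc]
  module
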